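/- Let W be the Coxeter group of type D_4 with generators s_1, s_2, s_3, s_4 where s_2 is the central vertex, acting on its canonical root system Φ (which has 12 positive roots), and let G be the group of symmetries generated by the 3-cycle g with g(s_1)=s_3, g(s_3)=s_4, g(s_4)=s_1, g(s_2)=s_2. Then Φ = W^G·α_1 ∪ W^G·α_2 ∪ W^G·α_3 ∪ W^G·α_4. -/

import Mathlib

open Real

/-- A Coxeter matrix on the set `S`, with `0` representing the label `∞`. -/
structure CoxeterMat (S : Type*) where
  m : S → S → ℕ
  diagonal : ∀ s, m s s = 1
  symmetric : ∀ s t, m s t = m t s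
  off_diagonal : ∀ s t, s ≠ t → m s t ≠ 1

namespace CoxeterMat

variable {S : Type*} (M : CoxeterMat S)

/-- The coefficient `⟨α_s, α_t⟩ = -2 cos (π / m_{s,t})`, with value `-2` when `m_{s,t} = ∞`. -/
noncomputable def c (s t : S) : ℝ :=
  if M.m s t = 0 then -2 else -2 * Real.cos (Real.pi / (M.m s t : ℝ))

/-- The simple root `α_s` in `V = ⊕_{s ∈ S} ℝ α_s`. -/
noncomputable def sroot (s : S) : S →₀ ℝ := Finsupp.single s 1

/-- The canonical bilinear form of the Coxeter graph. -/
noncomputable def bform : (S →₀ ℝ) →ₗ[ℝ] (S →₀ ℝ) →ₗ[ℝ] ℝ :=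
  Finsupp.lift _ ℝ S fun s => Finsupp.lift ℝ ℝ S fun t => M.c s t

/-- The simple reflection `σ_s : x ↦ x - ⟨α_s, x⟩ α_s`. -/
noncomputable def sigma (s : S) : (S →₀ ℝ) →ₗ[ℝ] (S →₀ ℝ) :=
  LinearMap.id - (M.bform (sroot s)).smulRight (sroot s)

/-- The Coxeter group `W`, realized as the subgroup of linear automorphisms of `V`
generated by the simple reflections. -/
noncomputable def Wgrp : Subgroup ((S →₀ ℝ) ≃ₗ[ℝ] (S →₀ ℝ)) :=
  Subgroup.closure {w | ∃ s : S, (w : (S →₀ ℝ) →ₗ[ℝ] (S →₀ ℝ)) = M.sigma s}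

/-- The canonical root system `Φ = {w(α_s) | w ∈ W, s ∈ S}`. -/
def Phi : Set (S →₀ ℝ) := {b | ∃ w ∈ M.Wgrp, ∃ s : S, b = w (sroot s)}

/-- The set of positive roots. -/
def PhiPos : Set (S →₀ ℝ) := {b | b ∈ M.Phi ∧ ∀ s, 0 ≤ b s}

/-- The equivalence relation `≡` on `Φ` generated by `α ≡₁ β ⟺ ⟨α, β⟩ ∉ {0, 1, -1}`. -/
def equivR : (S →₀ ℝ) → (S →₀ ℝ) → Prop :=
  Relation.EqvGen (fun a b => a ∈ M.Phi ∧ b ∈ M.Phi ∧ M.bform a b ∉ ({0, 1, -1} : Set ℝ))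

/-- The underlying graph of the Coxeter graph: `s` and `t` are joined iff `m_{s,t} ≥ 3`
(including `m_{s,t} = ∞`). -/
def graph : SimpleGraph S where
  Adj s t := s ≠ t ∧ M.m s t ≠ 2
  symm := ⟨fun s t h => ⟨h.1.symm, by rw [M.symmetric]; exact h.2⟩⟩
  loopless := ⟨fun s h => h.1 rfl⟩

/-- The action of a permutation of `S` on `V`. -/
noncomputable def permV (g : Equiv.Perm S) : (S →₀ ℝ) ≃ₗ[ℝ] (S →₀ ℝ) :=
  Finsupp.domLCongr g

/-- The set of elements of `W` fixed by the group `G` of symmetries (acting by conjugation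
by the corresponding permutations of coordinates). -/
noncomputable def WfixG (G : Subgroup (Equiv.Perm S)) :
    Set ((S →₀ ℝ) ≃ₗ[ℝ] (S →₀ ℝ)) :=
  {w | w ∈ M.Wgrp ∧ ∀ g ∈ G, permV g * w = w * permV g}

/-- Construct a simply laced Coxeter matrix from an adjacency relation. -/
noncomputable def ofAdj (A : S → S → Prop) (hs : ∀ s t, A s t → A t s)
    (hi : ∀ s, ¬ A s s) : CoxeterMat S where
  m s t := open Classical in if s = t then 1 else if A s t then 3 else 2
  diagonal s := by simp
  symmetric s t := by
    classical
    by_cases h : s = t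
    · subst h; rfl
    · have h' : t ≠ s := Ne.symm h
      simp only [if_neg h, if_neg h']
      by_cases hA : A s t
      · rw [if_pos hA, if_pos (hs s t hA)]
      · rw [if_neg hA, if_neg (fun h2 => hA (hs t s h2))]
  off_diagonal s t h := by
    classical
    simp only [if_neg h]
    split <;> norm_num

/-- Isomorphism of Coxeter graphs. -/
def Iso {T : Type*} (M : CoxeterMat S) (N : CoxeterMat T) : Prop :=
  ∃ e : S ≃ T, ∀ s t, N.m (e s) (e t) = M.m s t

/-- The full Coxeter subgraph spanned by `Y ⊆ S`. -/
def restrict (Y : Set S) : CoxeterMat Y where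
  m s t := M.m s t
  diagonal s := M.diagonal s
  symmetric s t := M.symmetric s t
  off_diagonal s t h := M.off_diagonal s t (fun hh => h (Subtype.ext hh))

end CoxeterMat

open CoxeterMat

/-- The Coxeter graph `A_n`: a path with `n` vertices. -/
noncomputable def pathA (n : ℕ) : CoxeterMat (Fin n) :=
  ofAdj (fun i j => i.val + 1 = j.val ∨ j.val + 1 = i.val)
    (fun _ _ h => h.symm)
    (fun s h => by rcases h with h | h <;> omega)

/-- The Coxeter graph `D_n`: a path `0 — 1 — ⋯ — (n-2)` together with an extra vertex `n-1`
joined to `n-3`. -/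
noncomputable def Dmat (n : ℕ) : CoxeterMat (Fin n) :=
  ofAdj (fun i j => i ≠ j ∧
      (((i.val + 1 = j.val ∧ j.val ≤ n - 2) ∨ (i.val + 2 = j.val ∧ j.val = n - 1)) ∨
       ((j.val + 1 = i.val ∧ i.val ≤ n - 2) ∨ (j.val + 2 = i.val ∧ i.val = n - 1))))
    (fun _ _ h => ⟨h.1.symm, h.2.symm⟩)
    (fun s h => h.1 rfl)

/-- Adjacency relation determined by a list of edges. -/
def listAdj {n : ℕ} (L : List (Fin n × Fin n)) (i j : Fin n) : Prop :=
  (i, j) ∈ L ∨ (j, i) ∈ L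

instance {n : ℕ} (L : List (Fin n × Fin n)) (i j : Fin n) : Decidable (listAdj L i j) := by
  unfold listAdj; infer_instance

/-- The Coxeter graph `E₆`. -/
noncomputable def E6mat : CoxeterMat (Fin 6) :=
  ofAdj (listAdj [(0,2),(2,3),(3,4),(4,5),(1,3)])
    (fun _ _ h => h.symm) (by decide)

/-- The Coxeter graph `E₇`. -/
noncomputable def E7mat : CoxeterMat (Fin 7) :=
  ofAdj (listAdj [(0,2),(2,3),(3,4),(4,5),(5,6),(1,3)])
    (fun _ _ h => h.symm) (by decide)

/-- The Coxeter graph `E₈`. -/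
noncomputable def E8mat : CoxeterMat (Fin 8) :=
  ofAdj (listAdj [(0,2),(2,3),(3,4),(4,5),(5,6),(6,7),(1,3)])
    (fun _ _ h => h.symm) (by decide)

/-- The Coxeter graph `A_∞`: the one-sided infinite path. -/
noncomputable def Ainf : CoxeterMat ℕ :=
  ofAdj (fun i j => i + 1 = j ∨ j + 1 = i)
    (fun _ _ h => h.symm)
    (fun s h => by omega)

/-- The Coxeter graph `_∞A_∞`: the two-sided infinite path. -/
noncomputable def ZAinf : CoxeterMat ℤ :=
  ofAdj (fun i j => i + 1 = j ∨ j + 1 = i)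
    (fun _ _ h => h.symm)
    (fun s h => by omega)

/-- The Coxeter graph `D_∞`: vertices `0, 1, 2, 3, …` with `0` and `1` joined to `2` and a
path `2 — 3 — 4 — ⋯`. -/
noncomputable def Dinf : CoxeterMat ℕ :=
  ofAdj (fun i j => i ≠ j ∧
      (((i = 0 ∧ j = 2) ∨ (i = 1 ∧ j = 2) ∨ (i + 1 = j ∧ 2 ≤ i)) ∨
       ((j = 0 ∧ i = 2) ∨ (j = 1 ∧ i = 2) ∨ (j + 1 = i ∧ 2 ≤ j))))
    (fun _ _ h => ⟨h.1.symm, h.2.symm⟩)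
    (fun s h => h.1 rfl)

/-- The affine Coxeter graph `Ã_n`: a cycle with `n + 1` vertices. -/
noncomputable def affA (n : ℕ) : CoxeterMat (ZMod (n + 1)) :=
  ofAdj (fun i j => i ≠ j ∧ (i + 1 = j ∨ j + 1 = i))
    (fun _ _ h => ⟨h.1.symm, h.2.symm⟩)
    (fun s h => h.1 rfl)

/-- The affine Coxeter graph `D̃_n` (on `n + 1` vertices, Bourbaki numbering): `0` and `1`
joined to `2`, a path `2 — 3 — ⋯ — (n-1)`, and `n` joined to `n-2`. -/
noncomputable def affD (n : ℕ) : CoxeterMat (Fin (n + 1)) :=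
  ofAdj (fun i j => i ≠ j ∧
      (((i.val = 0 ∧ j.val = 2) ∨ (i.val = 1 ∧ j.val = 2) ∨
        (i.val + 1 = j.val ∧ 2 ≤ i.val ∧ i.val ≤ n - 2) ∨
        (i.val = n - 2 ∧ j.val = n)) ∨
       ((j.val = 0 ∧ i.val = 2) ∨ (j.val = 1 ∧ i.val = 2) ∨
        (j.val + 1 = i.val ∧ 2 ≤ j.val ∧ j.val ≤ n - 2) ∨
        (j.val = n - 2 ∧ i.val = n))))
    (fun _ _ h => ⟨h.1.symm, h.2.symm⟩)
    (fun s h => h.1 rfl)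

/-- The affine Coxeter graph `Ẽ₆` (Bourbaki numbering, affine vertex `0`). -/
noncomputable def affE6 : CoxeterMat (Fin 7) :=
  ofAdj (listAdj [(1,3),(3,4),(4,5),(5,6),(2,4),(0,2)])
    (fun _ _ h => h.symm) (by decide)

/-- The affine Coxeter graph `Ẽ₇` (Bourbaki numbering, affine vertex `0`). -/
noncomputable def affE7 : CoxeterMat (Fin 8) :=
  ofAdj (listAdj [(0,1),(1,3),(3,4),(4,5),(5,6),(6,7),(2,4)])
    (fun _ _ h => h.symm) (by decide)

/-- The affine Coxeter graph `Ẽ₈` (Bourbaki numbering, affine vertex `0`). -/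
noncomputable def affE8 : CoxeterMat (Fin 9) :=
  ofAdj (listAdj [(1,3),(3,4),(4,5),(5,6),(6,7),(7,8),(2,4),(0,8)])
    (fun _ _ h => h.symm) (by decide)

/-!
The symmetry `g` fixes `u = s₁ s₃ s₄` (a product of three commuting reflections permuted by `g`)
and `s₂`, so these lie in `W^G`. Applying `u` and `s₂` at most three times to the simple roots
already produces the 24 roots of `D₄`, and this finite set is closed under every simple reflection.
Hence it contains `Φ`, and every root is a `W^G`-translate of a simple root.
-/

namespace CoxeterMat

variable {S : Type*} (M : CoxeterMat S)

theorem bform_sroot_sroot (s t : S) : M.bform (sroot s) (sroot t) = M.c s t := by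
  simp [bform, sroot]

theorem c_self (s : S) : M.c s s = 2 := by
  norm_num [c, M.diagonal]

theorem ofAdj_c_of_adj {A : S → S → Prop} {hs : ∀ s t, A s t → A t s} {hi : ∀ s, ¬ A s s}
    {s t : S} (h : A s t) : (ofAdj A hs hi).c s t = -1 := by
  have hne : s ≠ t := by rintro rfl; exact hi s h
  norm_num [c, ofAdj, hne, h]

theorem ofAdj_c_of_not_adj {A : S → S → Prop} {hs : ∀ s t, A s t → A t s}
    {hi : ∀ s, ¬ A s s} {s t : S} (hne : s ≠ t) (h : ¬ A s t) : (ofAdj A hs hi).c s t = 0 := by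
  norm_num [c, ofAdj, hne, h]

theorem sigma_apply (s : S) (x : S →₀ ℝ) :
    M.sigma s x = x - M.bform (sroot s) x • sroot s := rfl

theorem sigma_involutive (s : S) : Function.Involutive (M.sigma s) := fun x => by
  simp only [sigma_apply, map_sub, map_smul, bform_sroot_sroot, c_self]
  module

noncomputable def sigmaEquiv (s : S) : (S →₀ ℝ) ≃ₗ[ℝ] (S →₀ ℝ) :=
  LinearEquiv.ofInvolutive (M.sigma s) (M.sigma_involutive s)

@[simp]
theorem sigmaEquiv_apply (s : S) (x : S →₀ ℝ) : M.sigmaEquiv s x = M.sigma s x := rfl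

theorem sigmaEquiv_mem_Wgrp (s : S) : M.sigmaEquiv s ∈ M.Wgrp :=
  Subgroup.subset_closure ⟨s, rfl⟩

theorem Phi_subset_of_mapsTo_sigma {R : Set (S →₀ ℝ)} (hα : ∀ s, sroot s ∈ R)
    (hσ : ∀ s, Set.MapsTo (M.sigma s) R R) : M.Phi ⊆ R := by
  have hW : ∀ w ∈ M.Wgrp, Set.MapsTo w R R := by
    intro w hw
    induction hw using Subgroup.closure_induction'' with
    | mem w hw =>
      obtain ⟨s, hs⟩ := hw
      rw [show ⇑w = M.sigma s from congrArg DFunLike.coe hs]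
      exact hσ s
    | inv_mem w hw =>
      obtain ⟨s, hs⟩ := hw
      have hws : ⇑w = M.sigma s := congrArg DFunLike.coe hs
      have hinv : ⇑w⁻¹ = M.sigma s := funext fun x =>
        w.symm_apply_eq.2 (by rw [hws, M.sigma_involutive s x])
      rw [hinv]
      exact hσ s
    | one => exact Set.mapsTo_id R
    | mul u v _ _ hu hv => exact hu.comp hv
  rintro x ⟨w, hw, s, rfl⟩
  exact hW w hw (hα s)

noncomputable def permVHom : Equiv.Perm S →* ((S →₀ ℝ) ≃ₗ[ℝ] (S →₀ ℝ)) where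
  toFun := permV
  map_one' := Finsupp.domLCongr_refl
  map_mul' p q := (Finsupp.domLCongr_trans q p).symm

theorem mem_WfixG_closure_singleton {g : Equiv.Perm S} {w : (S →₀ ℝ) ≃ₗ[ℝ] (S →₀ ℝ)}
    (hw : w ∈ M.Wgrp) (hg : permV g * w = w * permV g) :
    w ∈ M.WfixG (Subgroup.closure {g}) := by
  have hle : Subgroup.closure {g} ≤ (Subgroup.centralizer {w}).comap permVHom := by
    rw [Subgroup.closure_le, Set.singleton_subset_iff, SetLike.mem_coe, Subgroup.mem_comap,
      Subgroup.mem_centralizer_singleton_iff]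
    exact hg
  exact ⟨hw, fun h hh => Subgroup.mem_centralizer_singleton_iff.mp (hle hh)⟩

theorem mul_mem_WfixG {G : Subgroup (Equiv.Perm S)} {u w : (S →₀ ℝ) ≃ₗ[ℝ] (S →₀ ℝ)}
    (hu : u ∈ M.WfixG G) (hw : w ∈ M.WfixG G) : u * w ∈ M.WfixG G :=
  ⟨mul_mem hu.1 hw.1, fun g hg => (Commute.mul_right (hu.2 g hg) (hw.2 g hg) :)⟩

def fixOrbit (G : Subgroup (Equiv.Perm S)) (s : S) : Set (S →₀ ℝ) :=
  {x | ∃ w ∈ M.WfixG G, x = w (sroot s)}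

theorem sroot_mem_fixOrbit (G : Subgroup (Equiv.Perm S)) (s : S) : sroot s ∈ M.fixOrbit G s :=
  ⟨1, ⟨one_mem _, fun _ _ => by rw [mul_one, one_mul]⟩, rfl⟩

theorem apply_mem_fixOrbit {G : Subgroup (Equiv.Perm S)} {s : S} {u : (S →₀ ℝ) ≃ₗ[ℝ] (S →₀ ℝ)}
    {x : S →₀ ℝ} (hu : u ∈ M.WfixG G) (hx : x ∈ M.fixOrbit G s) : u x ∈ M.fixOrbit G s := by
  obtain ⟨w, hw, rfl⟩ := hx
  exact ⟨u * w, M.mul_mem_WfixG hu hw, rfl⟩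

theorem fixOrbit_subset_Phi (G : Subgroup (Equiv.Perm S)) (s : S) : M.fixOrbit G s ⊆ M.Phi := by
  rintro x ⟨w, hw, rfl⟩
  exact ⟨w, hw.1, s, rfl⟩

end CoxeterMat

namespace D4

open CoxeterMat

theorem Dmat_four_c (s t : Fin 4) :
    (Dmat 4).c s t = if s = t then 2 else if s = 1 ∨ t = 1 then -1 else 0 := by
  split_ifs with hst hadj
  · subst hst
    exact (Dmat 4).c_self s
  · exact ofAdj_c_of_adj (by revert s t; decide)
  · exact ofAdj_c_of_not_adj hst (by revert s t; decide)

/- Integer coordinates with respect to the simple roots: `reflect s` and `rotate` are `σ_s` and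
the symmetry `g` in these coordinates, so that finite closure properties can be checked by
`decide`. -/
abbrev Coords := ℤ × ℤ × ℤ × ℤ

noncomputable def toV : Coords → (Fin 4 →₀ ℝ)
  | (a, b, c, d) => (a : ℝ) • sroot 0 + (b : ℝ) • sroot 1 + (c : ℝ) • sroot 2 + (d : ℝ) • sroot 3

def unit : Fin 4 → Coords
  | 0 => (1, 0, 0, 0)
  | 1 => (0, 1, 0, 0)
  | 2 => (0, 0, 1, 0)
  | 3 => (0, 0, 0, 1)

def reflect : Fin 4 → Coords → Coords
  | 0, (a, b, c, d) => (b - a, b, c, d)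
  | 1, (a, b, c, d) => (a, a - b + c + d, c, d)
  | 2, (a, b, c, d) => (a, b, b - c, d)
  | 3, (a, b, c, d) => (a, b, c, b - d)

def rotate : Coords → Coords
  | (a, b, c, d) => (d, b, a, c)

theorem toV_unit (s : Fin 4) : toV (unit s) = sroot s := by
  fin_cases s <;> simp [toV, unit]

theorem sigma_toV (s : Fin 4) (q : Coords) : (Dmat 4).sigma s (toV q) = toV (reflect s q) := by
  obtain ⟨a, b, c, d⟩ := q
  obtain rfl | rfl | rfl | rfl : s = 0 ∨ s = 1 ∨ s = 2 ∨ s = 3 := by omega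
  all_goals
  · simp only [sigma_apply, toV, reflect, map_add, map_smul, bform_sroot_sroot, Dmat_four_c]
    norm_num [Fin.ext_iff]
    module

def g : Equiv.Perm (Fin 4) := (Equiv.swap (2 : Fin 4) 3).trans (Equiv.swap 0 2)

theorem permV_toV (q : Coords) : permV g (toV q) = toV (rotate q) := by
  obtain ⟨a, b, c, d⟩ := q
  have hg : g 0 = 2 ∧ g 1 = 1 ∧ g 2 = 3 ∧ g 3 = 0 := by decide
  simp only [toV, rotate, map_add, map_smul, permV, sroot, Finsupp.domLCongr_single, hg]
  abel

theorem permV_g_mul_comm {w : (Fin 4 →₀ ℝ) ≃ₗ[ℝ] (Fin 4 →₀ ℝ)} {f : Coords → Coords}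
    (hw : ∀ q, w (toV q) = toV (f q)) (hf : ∀ s, rotate (f (unit s)) = f (rotate (unit s))) :
    permV g * w = w * permV g := by
  refine LinearEquiv.toLinearMap_injective <| Finsupp.lhom_ext' fun s => LinearMap.ext_ring ?_
  change permV g (w (sroot s)) = w (permV g (sroot s))
  rw [← toV_unit, hw, permV_toV, permV_toV, hw, hf]

noncomputable def u : (Fin 4 →₀ ℝ) ≃ₗ[ℝ] (Fin 4 →₀ ℝ) :=
  (Dmat 4).sigmaEquiv 0 * (Dmat 4).sigmaEquiv 2 * (Dmat 4).sigmaEquiv 3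

def reflectU (q : Coords) : Coords := reflect 0 (reflect 2 (reflect 3 q))

theorem u_toV (q : Coords) : u (toV q) = toV (reflectU q) := by
  simp only [u, reflectU, LinearEquiv.mul_apply, sigmaEquiv_apply, sigma_toV]

theorem u_mem_WfixG : u ∈ (Dmat 4).WfixG (Subgroup.closure {g}) :=
  (Dmat 4).mem_WfixG_closure_singleton
    (mul_mem (mul_mem ((Dmat 4).sigmaEquiv_mem_Wgrp 0) ((Dmat 4).sigmaEquiv_mem_Wgrp 2))
      ((Dmat 4).sigmaEquiv_mem_Wgrp 3))
    (permV_g_mul_comm u_toV (by decide))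

theorem sigmaEquiv_one_mem_WfixG : (Dmat 4).sigmaEquiv 1 ∈ (Dmat 4).WfixG (Subgroup.closure {g}) :=
  (Dmat 4).mem_WfixG_closure_singleton ((Dmat 4).sigmaEquiv_mem_Wgrp 1)
    (permV_g_mul_comm (sigma_toV 1) (by decide))

def grow (L : List Coords) : List Coords :=
  (L ++ L.map reflectU ++ L.map (reflect 1)).dedup

def reach : List Coords := grow^[3] (List.ofFn unit)

theorem unit_mem_reach : ∀ s, unit s ∈ reach := by decide

theorem reflect_mem_reach : ∀ s, ∀ q ∈ reach, reflect s q ∈ reach := by decide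

theorem forall_mem_iterate_grow {P : Coords → Prop} (hU : ∀ q, P q → P (reflectU q))
    (h1 : ∀ q, P q → P (reflect 1 q)) (n : ℕ) {L : List Coords} (hL : ∀ q ∈ L, P q) :
    ∀ q ∈ grow^[n] L, P q := by
  induction n generalizing L with
  | zero => exact hL
  | succ n ih =>
    refine ih fun q hq => ?_
    simp only [grow, List.mem_dedup, List.mem_append, List.mem_map] at hq
    rcases hq with (hq | ⟨p, hp, rfl⟩) | ⟨p, hp, rfl⟩
    exacts [hL q hq, hU p (hL p hp), h1 p (hL p hp)]

theorem Phi_subset_toV_reach : (Dmat 4).Phi ⊆ toV '' {q | q ∈ reach} := by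
  refine (Dmat 4).Phi_subset_of_mapsTo_sigma (fun s => ⟨unit s, unit_mem_reach s, toV_unit s⟩) ?_
  rintro s _ ⟨q, hq, rfl⟩
  exact ⟨reflect s q, reflect_mem_reach s q hq, (sigma_toV s q).symm⟩

theorem exists_toV_mem_fixOrbit {q : Coords} (hq : q ∈ reach) :
    ∃ s, toV q ∈ (Dmat 4).fixOrbit (Subgroup.closure {g}) s := by
  refine forall_mem_iterate_grow
    (P := fun q => ∃ s, toV q ∈ (Dmat 4).fixOrbit (Subgroup.closure {g}) s) ?_ ?_ 3 ?_ q hq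
  · rintro q ⟨s, hs⟩
    exact ⟨s, u_toV q ▸ (Dmat 4).apply_mem_fixOrbit u_mem_WfixG hs⟩
  · rintro q ⟨s, hs⟩
    exact ⟨s, sigma_toV 1 q ▸ (Dmat 4).apply_mem_fixOrbit sigmaEquiv_one_mem_WfixG hs⟩
  · intro q hq
    obtain ⟨s, rfl⟩ := List.mem_ofFn.mp hq
    exact ⟨s, toV_unit s ▸ (Dmat 4).sroot_mem_fixOrbit _ s⟩

end D4

/-- For `W` of type `D₄` (vertices `0, 1, 2, 3` corresponding to `s₁, s₂, s₃, s₄`, the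
central vertex being index `1`), and `G` generated by the 3-cycle `g` with
`g(s₁) = s₃, g(s₃) = s₄, g(s₄) = s₁, g(s₂) = s₂`, every root lies in a `W^G`-orbit of a
simple root. -/
theorem stmt17 :
    (Dmat 4).Phi =
      {x | ∃ w ∈ (Dmat 4).WfixG
          (Subgroup.closure {(Equiv.swap (2 : Fin 4) 3).trans (Equiv.swap 0 2)}),
        x = w (sroot (0 : Fin 4))} ∪
      {x | ∃ w ∈ (Dmat 4).WfixG
          (Subgroup.closure {(Equiv.swap (2 : Fin 4) 3).trans (Equiv.swap 0 2)}),
        x = w (sroot (1 : Fin 4))} ∪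
      {x | ∃ w ∈ (Dmat 4).WfixG
          (Subgroup.closure {(Equiv.swap (2 : Fin 4) 3).trans (Equiv.swap 0 2)}),
        x = w (sroot (2 : Fin 4))} ∪
      {x | ∃ w ∈ (Dmat 4).WfixG
          (Subgroup.closure {(Equiv.swap (2 : Fin 4) 3).trans (Equiv.swap 0 2)}),
        x = w (sroot (3 : Fin 4))} := by
  change (Dmat 4).Phi = (Dmat 4).fixOrbit (Subgroup.closure {D4.g}) 0 ∪ (Dmat 4).fixOrbit _ 1 ∪
    (Dmat 4).fixOrbit _ 2 ∪ (Dmat 4).fixOrbit _ 3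
  refine Set.Subset.antisymm (fun x hx => ?_) ?_
  · obtain ⟨q, hq, rfl⟩ := D4.Phi_subset_toV_reach hx
    obtain ⟨s, hs⟩ := D4.exists_toV_mem_fixOrbit hq
    fin_cases s
    exacts [.inl (.inl (.inl hs)), .inl (.inl (.inr hs)), .inl (.inr hs), .inr hs]
  · simp only [Set.union_subset_iff, (Dmat 4).fixOrbit_subset_Phi, and_self]
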